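/- For β = 1 and any integer α ≥ 1, the generating function H_{E✳}(x) counting paths in L_{1/α}(k) that start with an E-step, have no horizontal crosses, and have no right bounces satisfies H_{E✳}(x)·(1 + g_ee(x) + g_en(x)) = g_ee(x) + g_en(x) and H_{E✳}(x) = α·(c_α(x) − 1). Moreover, the generating function counting paths in L_{1/α}(k) that start with an N-step and have no horizontal crosses equals c_α(x) − 1; that is, for each k ≥ 1 the number of such paths is the Fuss–Catalan number (1/(αk+1))·C((α+1)k, k). -/

import Mathlib

/-!
Lattice paths with unit East (`true`) and unit North (`false`) steps,
bounces with respect to the line `y = (β/α)·x`, and the associated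
generating functions over `ℚ`.
-/

/-- A lattice path is a list of unit steps: `true` = East, `false` = North. -/
abbrev LatticePath := List Bool

/-- `p` is a lattice path from `(0,0)` to `(α*k, β*k)`, i.e. a member of `L_{β/α}(k)`. -/
def InL (α β k : ℕ) (p : LatticePath) : Prop :=
  p.count true = α * k ∧ p.count false = β * k

/-- `p` has a left bounce at step index `i`: step `i` is an E-step, step `i+1` is an
N-step, and their common endpoint (the point reached after `i+1` steps) lies on the
line `y = (β/α)·x`, i.e. `α·y = β·x`. -/
def IsLeftBounce (α β : ℕ) (p : LatticePath) (i : ℕ) : Prop :=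
  p[i]? = some true ∧ p[i + 1]? = some false ∧
    α * ((p.take (i + 1)).count false) = β * ((p.take (i + 1)).count true)

/-- `p` has a right bounce at step index `i`: step `i` is an N-step, step `i+1` is an
E-step, and their common endpoint lies on the line `y = (β/α)·x`. -/
def IsRightBounce (α β : ℕ) (p : LatticePath) (i : ℕ) : Prop :=
  p[i]? = some false ∧ p[i + 1]? = some true ∧
    α * ((p.take (i + 1)).count false) = β * ((p.take (i + 1)).count true)

/-- The number of left bounces of `p` with respect to the line `y = (β/α)·x`. -/
noncomputable def leftBounces (α β : ℕ) (p : LatticePath) : ℕ :=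
  {i | IsLeftBounce α β p i}.ncard

/-- The number of right bounces of `p` with respect to the line `y = (β/α)·x`. -/
noncomputable def rightBounces (α β : ℕ) (p : LatticePath) : ℕ :=
  {i | IsRightBounce α β p i}.ncard

/-- `p` is bounce-free: it has no left and no right bounces. -/
def BounceFree (α β : ℕ) (p : LatticePath) : Prop :=
  (∀ i, ¬ IsLeftBounce α β p i) ∧ (∀ i, ¬ IsRightBounce α β p i)

/-- The first step of `p` is `a`. -/
def FirstStep (p : LatticePath) (a : Bool) : Prop := p.head? = some a

/-- The last step of `p` is `b`. -/
def LastStep (p : LatticePath) (b : Bool) : Prop := p.getLast? = some b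

/-- The generating function `Σ_{k≥1} |S k|·xᵏ ∈ ℚ[[x]]` of a family of path sets. -/
noncomputable def gfOf (S : ℕ → Set LatticePath) : PowerSeries ℚ :=
  PowerSeries.mk fun k => if k = 0 then 0 else ((S k).ncard : ℚ)

/-- `g(x) = Σ_{k≥1} C((α+β)k, αk)·xᵏ`, counting all paths in `L_{β/α}(k)`. -/
noncomputable def gSer (α β : ℕ) : PowerSeries ℚ :=
  PowerSeries.mk fun k => if k = 0 then 0 else ((((α + β) * k).choose (α * k) : ℕ) : ℚ)

/-- `g_ee(x) = Σ_{k≥1} C((α+β)k−2, αk−2)·xᵏ`, counting EE-paths in `L_{β/α}(k)`.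
We write the lower index as `βk = ((α+β)k−2) − (αk−2)`, which equals
`C((α+β)k−2, αk−2)` by the symmetry of binomial coefficients and correctly
implements the convention `C(n, −1) = 0` (needed when `αk = 1`), which ℕ-truncated
subtraction would not. -/
noncomputable def geeSer (α β : ℕ) : PowerSeries ℚ :=
  PowerSeries.mk fun k => if k = 0 then 0 else ((((α + β) * k - 2).choose (β * k) : ℕ) : ℚ)

/-- `g_en(x) = Σ_{k≥1} C((α+β)k−2, αk−1)·xᵏ`, counting EN-paths in `L_{β/α}(k)`. -/
noncomputable def genSer (α β : ℕ) : PowerSeries ℚ :=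
  PowerSeries.mk fun k => if k = 0 then 0 else ((((α + β) * k - 2).choose (α * k - 1) : ℕ) : ℚ)

/-- `g_nn(x) = Σ_{k≥1} C((α+β)k−2, αk)·xᵏ`, counting NN-paths in `L_{β/α}(k)`. -/
noncomputable def gnnSer (α β : ℕ) : PowerSeries ℚ :=
  PowerSeries.mk fun k => if k = 0 then 0 else ((((α + β) * k - 2).choose (α * k) : ℕ) : ℚ)

/-- `f_ee(x)`: generating function of bounce-free EE-paths in `L_{β/α}(k)`. -/
noncomputable def feeSer (α β : ℕ) : PowerSeries ℚ :=
  gfOf fun k => {p | InL α β k p ∧ BounceFree α β p ∧ FirstStep p true ∧ LastStep p true}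

/-- `f_en(x)`: generating function of bounce-free EN-paths in `L_{β/α}(k)`. -/
noncomputable def fenSer (α β : ℕ) : PowerSeries ℚ :=
  gfOf fun k => {p | InL α β k p ∧ BounceFree α β p ∧ FirstStep p true ∧ LastStep p false}

/-- `f_nn(x)`: generating function of bounce-free NN-paths in `L_{β/α}(k)`. -/
noncomputable def fnnSer (α β : ℕ) : PowerSeries ℚ :=
  gfOf fun k => {p | InL α β k p ∧ BounceFree α β p ∧ FirstStep p false ∧ LastStep p false}

/-- `f(x)`: generating function of all bounce-free paths in `L_{β/α}(k)`. -/
noncomputable def fSer (α β : ℕ) : PowerSeries ℚ :=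
  gfOf fun k => {p | InL α β k p ∧ BounceFree α β p}

/-- `B_{ℓ,r}(x)`: generating function of paths in `L_{β/α}(k)` with exactly `ℓ`
left bounces and exactly `r` right bounces. -/
noncomputable def BSer (α β ℓ r : ℕ) : PowerSeries ℚ :=
  gfOf fun k => {p | InL α β k p ∧ leftBounces α β p = ℓ ∧ rightBounces α β p = r}

/-- The Fuss–Catalan generating function `c_α(x) = Σ_{k≥0} 1/(αk+1)·C((α+1)k, k)·xᵏ`. -/
noncomputable def fussCatalan (α : ℕ) : PowerSeries ℚ :=
  PowerSeries.mk fun k => (1 / ((α * k + 1 : ℕ) : ℚ)) * ((((α + 1) * k).choose k : ℕ) : ℚ)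

/-- For slope `1/α`: `p` has a horizontal cross at the lattice point `(α*i, i)` (`i ≥ 1`):
`p` passes through `(α*i, i)` (so the prefix of length `(α+1)*i` has exactly `α*i`
E-steps), and both the step ending there and the step starting there are E-steps. -/
def HasHCrossAt (α : ℕ) (p : LatticePath) (i : ℕ) : Prop :=
  1 ≤ i ∧ (p.take ((α + 1) * i)).count true = α * i ∧
    p[(α + 1) * i - 1]? = some true ∧ p[(α + 1) * i]? = some true

/-- `p` has no horizontal crosses with respect to the line `y = x/α`. -/
def NoHCross (α : ℕ) (p : LatticePath) : Prop := ∀ i, ¬ HasHCrossAt α p i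

/-- Generating function of paths in `L_{1/α}(k)` that start with an E-step, have no
horizontal crosses and no right bounces. -/
noncomputable def HEstar (α : ℕ) : PowerSeries ℚ :=
  gfOf fun k => {p | InL α 1 k p ∧ FirstStep p true ∧ NoHCross α p ∧
    ∀ i, ¬ IsRightBounce α 1 p i}

/-- Generating function of paths in `L_{1/α}(k)` that start with an N-step and have
no horizontal crosses. -/
noncomputable def NstartNHC (α : ℕ) : PowerSeries ℚ :=
  gfOf fun k => {p | InL α 1 k p ∧ FirstStep p false ∧ NoHCross α p}


/-!
Cut a path of `L_{1/α}(k)` at its first visit to the line `y = x/α` that is followed by an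
east step or by the end of the path. This factors it uniquely as a path that never leaves the
line eastwards, followed by a path that does not start with a north step. Applied to all
paths, and to the paths starting with an east step (ignoring the visit at the origin), the
factorization gives `A·E = L` and `H·E = E − 1`. Here `A` counts the paths weakly above the
line, `E = 1 + g_ee + g_en` counts the paths not starting with a north step, and
`H = H_{E✳}`: no horizontal cross and no right bounce together say exactly that the path never
leaves the line by an east step after its start. The identity
`(1+α)·C((α+1)k−1, k) = α·C((α+1)k, k)` reads `(1+α)·E = 1 + α·L`, whence `H = α·(A − 1)`.
Raney's cycle lemma (exactly one rotation of a word with `αk+1` east and `k` north steps stays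
weakly above the line before its last step) gives `(αk+1)·|A_k| = C((α+1)k, k)`, so `A = c_α`.
Finally, a path that starts with a north step and has no horizontal cross is exactly a
nonempty path weakly above the line.
-/

namespace List

theorem exists_getElem?_eq_some {β : Type*} {l : List β} {t : ℕ} (h : t < l.length) :
    ∃ b, l[t]? = some b :=
  ⟨_, getElem?_eq_getElem h⟩

section CycleLemma

variable {l : List ℤ}

private lemma sum_take_append_self_of_le {j : ℕ} (hj : j ≤ l.length) :
    ((l ++ l).take j).sum = (l.take j).sum := by
  rw [List.take_append, Nat.sub_eq_zero_of_le hj, List.take_zero, List.append_nil]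

private lemma sum_take_append_self_add (j : ℕ) :
    ((l ++ l).take (l.length + j)).sum = l.sum + (l.take j).sum := by
  rw [List.take_append, List.take_of_length_le (by omega), List.sum_append,
    Nat.add_sub_cancel_left]

private lemma sum_take_rotate {r t : ℕ} (hr : r ≤ l.length) (ht : t ≤ l.length) :
    ((l.rotate r).take t).sum = ((l ++ l).take (r + t)).sum - ((l ++ l).take r).sum := by
  have hpre : (l.rotate r).take t = ((l ++ l).drop r).take t := by
    rw [List.rotate_eq_drop_append_take hr, List.drop_append_of_le_length hr,
      List.take_append, List.take_append, List.length_drop,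
      List.take_take, min_eq_left (by omega : t - (l.length - r) ≤ r)]
  rw [hpre, List.take_add, List.sum_append]
  ring

private lemma rotate_sum_take_nonneg_iff {r : ℕ} (hr : r < l.length) :
    (∀ t < l.length, 0 ≤ ((l.rotate r).take t).sum) ↔
      ∀ t < l.length, (l.take r).sum ≤ ((l ++ l).take (r + t)).sum :=
  forall₂_congr fun t ht => by
    rw [sum_take_rotate hr.le ht.le, sum_take_append_self_of_le hr.le, sub_nonneg]

private lemma false_of_lt_of_rotate_sum_take_nonneg (hl : l.sum = -1) {r₁ r₂ : ℕ}
    (h₁₂ : r₁ < r₂) (hr₂ : r₂ < l.length)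
    (h₁ : ∀ t < l.length, (l.take r₁).sum ≤ ((l ++ l).take (r₁ + t)).sum)
    (h₂ : ∀ t < l.length, (l.take r₂).sum ≤ ((l ++ l).take (r₂ + t)).sum) : False := by
  have h₁ := h₁ (r₂ - r₁) (by omega)
  have h₂ := h₂ (l.length + r₁ - r₂) (by omega)
  rw [Nat.add_sub_cancel' h₁₂.le, sum_take_append_self_of_le hr₂.le] at h₁
  rw [← Nat.add_sub_assoc (by omega), Nat.add_sub_cancel_left, sum_take_append_self_add,
    hl] at h₂
  linarith

/-- Raney's cycle lemma. -/
theorem existsUnique_rotate_sum_take_nonneg (hl : l.sum = -1) :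
    ∃! r, r < l.length ∧ ∀ t < l.length, 0 ≤ ((l.rotate r).take t).sum := by
  classical
  set m := l.length
  set S : ℕ → ℤ := fun j => (l.take j).sum
  have hm : 0 < m := List.length_pos_of_ne_nil (by rintro h; simp [h] at hl)
  -- the good rotation starts at the first minimum of the prefix sums
  have hmin : ∃ r, r < m ∧ ∀ j < m, S r ≤ S j := by
    obtain ⟨r, hr, hrmin⟩ := Finset.exists_min_image (Finset.range m) S ⟨0, by simpa⟩
    exact ⟨r, by simpa using hr, fun j hj => hrmin j (by simpa)⟩
  obtain ⟨hrm, hrmin⟩ := Nat.find_spec hmin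
  set r := Nat.find hmin
  have hr : ∀ t < m, S r ≤ ((l ++ l).take (r + t)).sum := by
    intro t ht
    rcases lt_or_ge (r + t) m with hrt | hrt
    · rw [sum_take_append_self_of_le hrt.le]
      exact hrmin (r + t) hrt
    · obtain ⟨j, hj⟩ : ∃ j, r + t = m + j := ⟨r + t - m, by omega⟩
      have hlt : S r < S j := by
        have hnot := Nat.find_min hmin (show j < r by omega)
        push Not at hnot
        obtain ⟨i, hi, hij⟩ := hnot (by omega)
        exact (hrmin i hi).trans_lt hij
      rw [hj, sum_take_append_self_add, hl]
      linarith
  refine ⟨r, ⟨hrm, (rotate_sum_take_nonneg_iff hrm).2 hr⟩, fun r' ⟨hr'm, hr'⟩ => ?_⟩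
  rw [rotate_sum_take_nonneg_iff hr'm] at hr'
  rcases lt_trichotomy r' r with h | h | h
  · exact (false_of_lt_of_rotate_sum_take_nonneg hl h hrm hr' hr).elim
  · exact h
  · exact (false_of_lt_of_rotate_sum_take_nonneg hl h hr'm hr hr').elim

end CycleLemma

end List

section CountGF

open Finset

variable {β : Type*}

/-- Unlike `gfOf`, this keeps the constant term `|S 0|`. -/
noncomputable def countGF (S : ℕ → Set (List β)) : PowerSeries ℚ :=
  PowerSeries.mk fun k => ((S k).ncard : ℚ)

theorem countGF_mul_of_unique_factorization {X Y Z : ℕ → Set (List β)}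
    (hX : ∀ i, (X i).Finite) (hY : ∀ j, (Y j).Finite)
    (hZ : ∀ k p, p ∈ Z k ↔ ∃ i j q r, i + j = k ∧ q ∈ X i ∧ r ∈ Y j ∧ q ++ r = p)
    (huniq : ∀ {i i' j j' q q' r r'}, q ∈ X i → r ∈ Y j → q' ∈ X i' → r' ∈ Y j' →
      q ++ r = q' ++ r' → i = i' ∧ q = q') :
    countGF X * countGF Y = countGF Z := by
  classical
  ext k
  let s := (antidiagonal k).sigma fun ij => (hX ij.1).toFinset ×ˢ (hY ij.2).toFinset
  have hZk : Z k = (s.image fun x => x.2.1 ++ x.2.2 : Finset (List β)) := by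
    ext p
    simp [s, hZ, and_assoc]
  have hinj : Set.InjOn (fun x : (_ : ℕ × ℕ) × List β × List β => x.2.1 ++ x.2.2) s := by
    rintro ⟨⟨i, j⟩, q, r⟩ hx ⟨⟨i', j'⟩, q', r'⟩ hx' heq
    simp only [s, mem_coe, mem_sigma, HasAntidiagonal.mem_antidiagonal, mem_product,
      Set.Finite.mem_toFinset] at hx hx'
    obtain ⟨rfl, rfl⟩ := huniq hx.2.1 hx.2.2 hx'.2.1 hx'.2.2 heq
    obtain rfl := List.append_cancel_left heq
    obtain rfl : j = j' := by omega
    rfl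
  simp only [countGF, PowerSeries.coeff_mul, PowerSeries.coeff_mk]
  rw [hZk, Set.ncard_coe_finset, card_image_of_injOn hinj, card_sigma, Nat.cast_sum]
  refine sum_congr rfl fun ij _ => ?_
  rw [card_product, Set.ncard_eq_toFinset_card _ (hX _), Set.ncard_eq_toFinset_card _ (hY _),
    Nat.cast_mul]

end CountGF

theorem finite_setOf_count_eq (a b : ℕ) :
    {l : List Bool | l.count true = a ∧ l.count false = b}.Finite :=
  (List.finite_length_eq Bool (a + b)).subset fun l ⟨ha, hb⟩ => by
    simp [← List.count_true_add_count_false, ha, hb]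

theorem ncard_setOf_count_eq : ∀ a b : ℕ,
    {l : List Bool | l.count true = a ∧ l.count false = b}.ncard = (a + b).choose b
  | 0, 0 => by
    rw [show {l : List Bool | l.count true = 0 ∧ l.count false = 0} = {[]} by
      ext (_ | ⟨_ | _, l⟩) <;> simp]
    simp
  | 0, b + 1 => by
    rw [show {l : List Bool | l.count true = 0 ∧ l.count false = b + 1} =
        List.cons false '' {l | l.count true = 0 ∧ l.count false = b} by
      ext (_ | ⟨_ | _, l⟩) <;> simp,
      Set.ncard_image_of_injective _ List.cons_injective, ncard_setOf_count_eq 0 b]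
    simp
  | a + 1, 0 => by
    rw [show {l : List Bool | l.count true = a + 1 ∧ l.count false = 0} =
        List.cons true '' {l | l.count true = a ∧ l.count false = 0} by
      ext (_ | ⟨_ | _, l⟩) <;> simp,
      Set.ncard_image_of_injective _ List.cons_injective, ncard_setOf_count_eq a 0]
    simp
  | a + 1, b + 1 => by
    rw [show {l : List Bool | l.count true = a + 1 ∧ l.count false = b + 1} =
        List.cons true '' {l | l.count true = a ∧ l.count false = b + 1} ∪
        List.cons false '' {l | l.count true = a + 1 ∧ l.count false = b} by
      ext (_ | ⟨_ | _, l⟩) <;> simp,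
      Set.ncard_union_eq (by rw [Set.disjoint_left]; rintro _ ⟨_, _, rfl⟩ ⟨_, _, h⟩; simp at h)
        ((finite_setOf_count_eq _ _).image _) ((finite_setOf_count_eq _ _).image _),
      Set.ncard_image_of_injective _ List.cons_injective,
      Set.ncard_image_of_injective _ List.cons_injective, ncard_setOf_count_eq a (b + 1),
      ncard_setOf_count_eq (a + 1) b, show a + 1 + (b + 1) = a + (b + 1) + 1 by ring,
      Nat.choose_succ_succ', add_comm, show a + 1 + b = a + (b + 1) by ring]

theorem choose_sub_one_eq_add {α k : ℕ} (hα : 1 ≤ α) (hk : 1 ≤ k) :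
    ((α + 1) * k - 1).choose k =
      ((α + 1) * k - 2).choose k + ((α + 1) * k - 2).choose (α * k - 1) := by
  obtain ⟨j, rfl⟩ : ∃ j, k = j + 1 := ⟨k - 1, by omega⟩
  have hαk : 1 ≤ α * (j + 1) := Nat.one_le_iff_ne_zero.2 (Nat.mul_ne_zero (by omega) (by omega))
  have hn : (α + 1) * (j + 1) = α * (j + 1) + j + 1 := by ring
  rw [Nat.choose_symm_of_eq_add (show (α + 1) * (j + 1) - 2 = (α * (j + 1) - 1) + j by omega),
    show (α + 1) * (j + 1) - 1 = (α + 1) * (j + 1) - 2 + 1 by omega, Nat.choose_succ_succ',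
    add_comm]

theorem succ_mul_choose_sub_one {α k : ℕ} (hk : 0 < k) :
    (α + 1) * ((α + 1) * k - 1).choose k = α * ((α + 1) * k).choose k := by
  have h := Nat.choose_mul_succ_eq ((α + 1) * k - 1) k
  rw [Nat.sub_add_cancel (by nlinarith), show (α + 1) * k - k = α * k by rw [add_mul]; omega] at h
  apply Nat.eq_of_mul_eq_mul_right hk
  calc (α + 1) * ((α + 1) * k - 1).choose k * k = ((α + 1) * k - 1).choose k * ((α + 1) * k) := by
        ring
    _ = α * ((α + 1) * k).choose k * k := by rw [h]; ring

namespace LatticePath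

variable {α : ℕ}

def step (α : ℕ) : Bool → ℤ
  | true => -1
  | false => α

/-- `α·y − x` at the point reached after `t` steps: the path is on the line `y = x/α` iff this
vanishes, and weakly above it iff this is nonnegative. -/
def height (α : ℕ) (p : LatticePath) (t : ℕ) : ℤ := ((p.take t).map (step α)).sum

theorem sum_map_step (l : List Bool) :
    (l.map (step α)).sum = α * l.count false - l.count true := by
  induction l with
  | nil => simp
  | cons b l ih => cases b <;> simp [step, ih] <;> ring

theorem height_eq (p : LatticePath) (t : ℕ) :
    height α p t = α * (p.take t).count false - (p.take t).count true :=
  sum_map_step _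

@[simp] theorem height_zero (p : LatticePath) : height α p 0 = 0 := by simp [height]

theorem height_succ {p : LatticePath} {t : ℕ} {b : Bool} (h : p[t]? = some b) :
    height α p (t + 1) = height α p t + step α b := by
  simp [height, List.take_add_one, h]

theorem height_take {p : LatticePath} {t n : ℕ} (h : t ≤ n) :
    height α (p.take n) t = height α p t := by
  rw [height, List.take_take, min_eq_left h, height]

theorem height_append_of_le {q r : LatticePath} {t : ℕ} (h : t ≤ q.length) :
    height α (q ++ r) t = height α q t := by
  rw [height, List.take_append, Nat.sub_eq_zero_of_le h, List.take_zero, List.append_nil, height]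

theorem height_of_length_le {p : LatticePath} {t : ℕ} (h : p.length ≤ t) :
    height α p t = height α p p.length := by
  rw [height, height, List.take_of_length_le h, List.take_length]

theorem height_eq_zero_iff {p : LatticePath} {t : ℕ} :
    height α p t = 0 ↔ α * (p.take t).count false = (p.take t).count true := by
  rw [height_eq]; omega

theorem height_length_of_inL {p : LatticePath} {k : ℕ} (h : InL α 1 k p) :
    height α p p.length = 0 := by
  rw [height_eq_zero_iff, List.take_length, h.1, h.2, one_mul]

theorem inL_of_height_length {p : LatticePath} (h : height α p p.length = 0) :
    InL α 1 (p.count false) p := by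
  rw [height_eq_zero_iff, List.take_length] at h
  exact ⟨h.symm, (one_mul _).symm⟩

theorem InL.append {i j : ℕ} {q r : LatticePath} (hq : InL α 1 i q) (hr : InL α 1 j r) :
    InL α 1 (i + j) (q ++ r) := by
  constructor <;> simp only [List.count_append, hq.1, hq.2, hr.1, hr.2] <;> ring

theorem InL.of_append {k i : ℕ} {q r : LatticePath} (h : InL α 1 k (q ++ r))
    (hq : InL α 1 i q) : i ≤ k ∧ InL α 1 (k - i) r := by
  obtain ⟨h₁, h₂⟩ := h
  rw [List.count_append, hq.1] at h₁
  rw [List.count_append, hq.2, one_mul, one_mul] at h₂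
  refine ⟨by omega, ?_, by omega⟩
  rw [Nat.mul_sub]
  omega

theorem InL.index_eq {i i' : ℕ} {p : LatticePath} (h : InL α 1 i p) (h' : InL α 1 i' p) :
    i = i' := by
  simpa using h.2.symm.trans h'.2

theorem eq_nil_of_inL_zero {p : LatticePath} (h : InL α 1 0 p) : p = [] := by
  rw [← List.length_eq_zero_iff, ← List.count_true_add_count_false, h.1, h.2]
  simp

theorem ne_nil_of_firstStep {p : LatticePath} {a : Bool} (h : FirstStep p a) : p ≠ [] := by
  rintro rfl
  simp [FirstStep] at h

def NoEastFrom (α s : ℕ) (p : LatticePath) : Prop :=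
  ∀ t, s ≤ t → height α p t = 0 → p[t]? ≠ some true

-- `p[t]? ≠ some false` also holds when `p` ends after `t` steps.
def IsCut (α : ℕ) (p : LatticePath) (t : ℕ) : Prop := height α p t = 0 ∧ p[t]? ≠ some false

def IsPrimeFrom (α s : ℕ) (q : LatticePath) : Prop :=
  s ≤ q.length ∧ height α q q.length = 0 ∧ NoEastFrom α s q

theorem isPrimeFrom_take_iff {p : LatticePath} {s t : ℕ} (ht : t ≤ p.length) :
    IsPrimeFrom α s (p.take t) ∧ (p.drop t).head? ≠ some false ↔
      IsLeast {u | s ≤ u ∧ IsCut α p u} t := by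
  simp only [IsPrimeFrom, List.length_take, min_eq_left ht, height_take le_rfl, List.head?_drop]
  constructor
  · rintro ⟨⟨hst, hcut, hno⟩, hnext⟩
    refine ⟨⟨hst, hcut, hnext⟩, fun u ⟨hsu, hu0, hun⟩ => ?_⟩
    by_contra! hut
    have hue := hno u hsu (by rwa [height_take hut.le])
    rw [List.getElem?_take_of_lt hut] at hue
    rw [List.getElem?_eq_getElem (by omega)] at hue hun
    cases p[u] <;> simp_all
  · rintro ⟨⟨hst, hcut, hnext⟩, hmin⟩
    refine ⟨⟨hst, hcut, fun u hsu hu0 hu => ?_⟩, hnext⟩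
    have hut : u < t := by
      by_contra! h
      simp [not_lt.2 h] at hu
    rw [height_take hut.le] at hu0
    rw [List.getElem?_take_of_lt hut] at hu
    exact absurd (hmin ⟨hsu, hu0, by simp [hu]⟩) (not_le.2 hut)

theorem isLeast_cut_append {q r : LatticePath} {s : ℕ} (hq : IsPrimeFrom α s q)
    (hr : r.head? ≠ some false) : IsLeast {u | s ≤ u ∧ IsCut α (q ++ r) u} q.length := by
  have h := isPrimeFrom_take_iff (α := α) (s := s) (p := q ++ r) (t := q.length) (by simp)
  rw [List.take_left' rfl, List.drop_left' rfl] at h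
  exact h.1 ⟨hq, hr⟩

theorem exists_cut_factorization {p : LatticePath} {s : ℕ} (hp : height α p p.length = 0)
    (hs : s ≤ p.length) : ∃ q r, q ++ r = p ∧ IsPrimeFrom α s q ∧ r.head? ≠ some false := by
  classical
  have hcut : s ≤ p.length ∧ IsCut α p p.length := ⟨hs, hp, by simp⟩
  have hex : ∃ u, s ≤ u ∧ IsCut α p u := ⟨_, hcut⟩
  obtain ⟨hq, hr⟩ := (isPrimeFrom_take_iff (Nat.find_min' hex hcut)).2 (Nat.isLeast_find hex)
  exact ⟨_, _, List.take_append_drop _ p, hq, hr⟩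

theorem eq_of_cut_factorization {q q' r r' : LatticePath} {s : ℕ} (h : q ++ r = q' ++ r')
    (hq : IsPrimeFrom α s q) (hr : r.head? ≠ some false)
    (hq' : IsPrimeFrom α s q') (hr' : r'.head? ≠ some false) : q = q' := by
  have hlen := (isLeast_cut_append hq hr).unique (h ▸ isLeast_cut_append hq' hr')
  rw [← List.take_left' (l₁ := q) (l₂ := r) rfl, h, hlen, List.take_left' rfl]

theorem inL_iff_exists_cut_factorization {s k : ℕ} {p : LatticePath} (hs : s ≤ p.length) :
    InL α 1 k p ↔ ∃ i j q r, i + j = k ∧ (InL α 1 i q ∧ IsPrimeFrom α s q) ∧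
      (InL α 1 j r ∧ r.head? ≠ some false) ∧ q ++ r = p := by
  constructor
  · intro hp
    obtain ⟨q, r, rfl, hq, hr⟩ := exists_cut_factorization (height_length_of_inL hp) hs
    obtain ⟨hik, hrL⟩ := InL.of_append hp (inL_of_height_length hq.2.1)
    exact ⟨_, _, q, r, Nat.add_sub_cancel' hik, ⟨inL_of_height_length hq.2.1, hq⟩, ⟨hrL, hr⟩, rfl⟩
  · rintro ⟨i, j, q, r, rfl, ⟨hqL, -⟩, ⟨hrL, -⟩, rfl⟩
    exact InL.append hqL hrL

theorem eq_of_inL_cut_factorization {s i i' j j' : ℕ} {q q' r r' : LatticePath}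
    (hq : InL α 1 i q ∧ IsPrimeFrom α s q) (hr : InL α 1 j r ∧ r.head? ≠ some false)
    (hq' : InL α 1 i' q' ∧ IsPrimeFrom α s q') (hr' : InL α 1 j' r' ∧ r'.head? ≠ some false)
    (h : q ++ r = q' ++ r') : i = i' ∧ q = q' := by
  obtain rfl := eq_of_cut_factorization h hq.2 hr.2 hq'.2 hr'.2
  exact ⟨InL.index_eq hq.1 hq'.1, rfl⟩

def Above (α : ℕ) (p : LatticePath) : Prop := ∀ t, 0 ≤ height α p t

/-- North steps only raise the height, so the first step below the line is an east step from the
line, and the step before it (if any) cannot be a north step. -/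
theorem exists_east_exit_of_not_above (hα : 1 ≤ α) {p : LatticePath} (h : ¬ Above α p) :
    ∃ t, height α p t = 0 ∧ p[t]? = some true ∧ (t = 0 ∨ p[t - 1]? = some true) := by
  classical
  simp only [Above, not_forall, not_le] at h
  obtain ⟨hneg, hmin⟩ := Nat.isLeast_find h
  obtain ⟨t, ht⟩ : ∃ t, Nat.find h = t + 1 :=
    Nat.exists_eq_succ_of_ne_zero fun h0 => by simp [h0] at hneg
  have hnonneg : ∀ u ≤ t, 0 ≤ height α p u := fun u hu => by
    by_contra! hu'
    exact absurd (hmin hu') (by omega)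
  rw [Set.mem_ofPred_eq, ht] at hneg
  have htlen : t < p.length := by
    by_contra! hlen
    rw [height_of_length_le (by omega)] at hneg
    linarith [hnonneg p.length hlen]
  obtain ⟨b, hb⟩ := List.exists_getElem?_eq_some htlen
  rw [height_succ hb] at hneg
  have ht0 := hnonneg t le_rfl
  cases b
  · simp only [step] at hneg
    omega
  have h0 : height α p t = 0 := by simp only [step] at hneg; omega
  refine ⟨t, h0, hb, ?_⟩
  rcases t with _ | s
  · exact Or.inl rfl
  obtain ⟨c, hc⟩ := List.exists_getElem?_eq_some (by omega : s < p.length)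
  cases c
  · rw [height_succ hc] at h0
    have := hnonneg s (by omega)
    simp only [step] at h0
    omega
  · exact Or.inr hc

theorem Above.noEastFrom {p : LatticePath} (h : Above α p) (s : ℕ) : NoEastFrom α s p :=
  fun t _ ht0 hte => by
    have := h (t + 1)
    rw [height_succ hte, ht0, step] at this
    omega

theorem above_iff_noEastFrom_zero (hα : 1 ≤ α) {p : LatticePath} :
    Above α p ↔ NoEastFrom α 0 p := by
  refine ⟨fun h => h.noEastFrom 0, fun h => ?_⟩
  by_contra hp
  obtain ⟨t, ht0, hte, -⟩ := exists_east_exit_of_not_above hα hp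
  exact h t t.zero_le ht0 hte

theorem isPrimeFrom_zero_iff (hα : 1 ≤ α) {i : ℕ} {q : LatticePath} (hq : InL α 1 i q) :
    IsPrimeFrom α 0 q ↔ Above α q :=
  ⟨fun h => (above_iff_noEastFrom_zero hα).2 h.2.2,
    fun h => ⟨Nat.zero_le _, height_length_of_inL hq, h.noEastFrom 0⟩⟩

theorem noHCross_iff {p : LatticePath} : NoHCross α p ↔
    ∀ t, 1 ≤ t → height α p t = 0 → p[t - 1]? = some true → p[t]? ≠ some true := by
  have hcount : ∀ {t}, p[t]? = some true →
      (p.take t).count true + (p.take t).count false = t := fun hte => by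
    rw [List.count_true_add_count_false, List.length_take,
      min_eq_left (List.getElem?_eq_some_iff.1 hte).1.le]
  constructor
  · intro h t ht ht0 hprev hte
    rw [height_eq_zero_iff] at ht0
    have hti : (α + 1) * (p.take t).count false = t := by linarith [hcount hte]
    refine h ((p.take t).count false) ⟨Nat.pos_of_ne_zero fun h0 => ?_, ?_, ?_, ?_⟩
    · rw [h0] at hti
      omega
    all_goals rw [hti]
    exacts [ht0.symm, hprev, hte]
  · rintro h i ⟨hi, hct, hprev, hte⟩
    have := hcount hte
    exact h _ (by nlinarith) (by rw [height_eq_zero_iff]; nlinarith) hprev hte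

theorem isRightBounce_iff {p : LatticePath} {i : ℕ} : IsRightBounce α 1 p i ↔
    p[i]? = some false ∧ p[i + 1]? = some true ∧ height α p (i + 1) = 0 := by
  rw [IsRightBounce, height_eq_zero_iff, one_mul]

theorem noHCross_and_noRightBounce_iff {p : LatticePath} :
    (NoHCross α p ∧ ∀ i, ¬ IsRightBounce α 1 p i) ↔ NoEastFrom α 1 p := by
  simp only [noHCross_iff, isRightBounce_iff]
  constructor
  · rintro ⟨hcross, hbounce⟩ t ht ht0 hte
    obtain ⟨b, hb⟩ := List.exists_getElem?_eq_some
      (by have := (List.getElem?_eq_some_iff.1 hte).1; omega : t - 1 < p.length)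
    cases b
    · exact hbounce (t - 1) ⟨hb, by rwa [Nat.sub_add_cancel ht], by rwa [Nat.sub_add_cancel ht]⟩
    · exact hcross t ht ht0 hb hte
  · intro h
    exact ⟨fun t ht ht0 _ hte => h t ht ht0 hte,
      fun i ⟨_, hte, ht0⟩ => h (i + 1) (by omega) ht0 hte⟩

theorem firstStep_false_and_noHCross_iff (hα : 1 ≤ α) {p : LatticePath} (hp : p ≠ []) :
    (FirstStep p false ∧ NoHCross α p) ↔ Above α p := by
  rw [FirstStep, List.head?_eq_getElem?, noHCross_iff]
  constructor
  · rintro ⟨hfirst, hcross⟩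
    by_contra habove
    obtain ⟨t, ht0, hte, hprev⟩ := exists_east_exit_of_not_above hα habove
    rcases Nat.eq_zero_or_pos t with rfl | ht
    · simp [hfirst] at hte
    · exact hcross t ht ht0 (hprev.resolve_left ht.ne') hte
  · intro h
    refine ⟨?_, fun t _ ht0 _ => h.noEastFrom 0 t t.zero_le ht0⟩
    obtain ⟨b, hb⟩ := List.exists_getElem?_eq_some (List.length_pos_of_ne_nil hp)
    cases b
    · exact hb
    · exact absurd hb (h.noEastFrom 0 0 le_rfl (height_zero p))

def paths (α k : ℕ) : Set LatticePath := {p | InL α 1 k p}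

/-- For `k = 0` this is `{[]}`, so its generating function has constant term `1`. -/
def notNorthFirst (α k : ℕ) : Set LatticePath := {p | InL α 1 k p ∧ p.head? ≠ some false}

def eastFirst (α k : ℕ) : Set LatticePath := {p | InL α 1 k p ∧ FirstStep p true}

def pathsAbove (α k : ℕ) : Set LatticePath := {p | InL α 1 k p ∧ Above α p}

def eastFirstNoEastReturn (α k : ℕ) : Set LatticePath :=
  {p | InL α 1 k p ∧ FirstStep p true ∧ NoEastFrom α 1 p}

theorem finite_paths (α k : ℕ) : (paths α k).Finite := finite_setOf_count_eq _ _

theorem notNorthFirst_zero (α : ℕ) : notNorthFirst α 0 = {[]} := by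
  ext p
  constructor
  · exact fun h => eq_nil_of_inL_zero h.1
  · rintro rfl
    simp [notNorthFirst, InL]

theorem pathsAbove_zero (α : ℕ) : pathsAbove α 0 = {[]} := by
  ext p
  constructor
  · exact fun h => eq_nil_of_inL_zero h.1
  · rintro rfl
    exact ⟨by simp [InL], fun t => by simp [height]⟩

theorem eastFirst_eq_diff (α k : ℕ) : eastFirst α k = notNorthFirst α k \ {[]} := by
  ext (_ | ⟨_ | _, l⟩) <;> simp [eastFirst, notNorthFirst, FirstStep]

theorem setOf_firstStep_false_noHCross_eq (hα : 1 ≤ α) {k : ℕ} (hk : 0 < k) :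
    {p | InL α 1 k p ∧ FirstStep p false ∧ NoHCross α p} = pathsAbove α k := by
  ext p
  refine and_congr_right fun hp => firstStep_false_and_noHCross_iff hα fun h => ?_
  have := hp.2
  simp [h] at this
  omega

theorem countGF_pathsAbove_mul (hα : 1 ≤ α) :
    countGF (pathsAbove α) * countGF (notNorthFirst α) = countGF (paths α) := by
  have hprime : ∀ i q, (InL α 1 i q ∧ IsPrimeFrom α 0 q) ↔ q ∈ pathsAbove α i :=
    fun _ _ => and_congr_right (isPrimeFrom_zero_iff hα)
  refine countGF_mul_of_unique_factorization
    (fun i => (finite_paths α i).subset fun _ h => h.1)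
    (fun j => (finite_paths α j).subset fun _ h => h.1) (fun k p => ?_)
    (fun hq hr hq' hr' h => eq_of_inL_cut_factorization ((hprime _ _).2 hq) hr
      ((hprime _ _).2 hq') hr' h)
  rw [paths, Set.mem_ofPred_eq, inL_iff_exists_cut_factorization (Nat.zero_le _)]
  exact exists₄_congr fun i j q r => and_congr_right fun _ => and_congr_left fun _ => hprime i q

theorem countGF_eastFirstNoEastReturn_mul :
    countGF (eastFirstNoEastReturn α) * countGF (notNorthFirst α) = countGF (eastFirst α) := by
  have hprime : ∀ i q, q ∈ eastFirstNoEastReturn α i ↔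
      (InL α 1 i q ∧ IsPrimeFrom α 1 q) ∧ FirstStep q true := fun i q =>
    ⟨fun ⟨hqL, hfirst, hq⟩ => ⟨⟨hqL, List.length_pos_of_ne_nil (ne_nil_of_firstStep hfirst),
        height_length_of_inL hqL, hq⟩, hfirst⟩,
      fun ⟨⟨hqL, _, _, hq⟩, hfirst⟩ => ⟨hqL, hfirst, hq⟩⟩
  have hfirst : ∀ {q r : LatticePath}, q ≠ [] → (FirstStep (q ++ r) true ↔ FirstStep q true) :=
    fun hq => by rw [FirstStep, FirstStep, List.head?_append_of_ne_nil _ hq]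
  refine countGF_mul_of_unique_factorization
    (fun i => (finite_paths α i).subset fun _ h => h.1)
    (fun j => (finite_paths α j).subset fun _ h => h.1) (fun k p => ?_)
    (fun hq hr hq' hr' h => eq_of_inL_cut_factorization ((hprime _ _).1 hq).1 hr
      ((hprime _ _).1 hq').1 hr' h)
  constructor
  · rintro ⟨hp, hp1⟩
    obtain ⟨i, j, q, r, hij, hq, hr, rfl⟩ := (inL_iff_exists_cut_factorization
      (List.length_pos_of_ne_nil (ne_nil_of_firstStep hp1))).1 hp
    have hq0 : q ≠ [] := List.ne_nil_of_length_pos hq.2.1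
    exact ⟨i, j, q, r, hij, (hprime i q).2 ⟨hq, (hfirst hq0).1 hp1⟩, hr, rfl⟩
  · rintro ⟨i, j, q, r, rfl, hq, hr, rfl⟩
    exact ⟨InL.append hq.1 hr.1, (hfirst (ne_nil_of_firstStep hq.2.1)).2 hq.2.1⟩

def pathsEastPlusOne (α k : ℕ) : Set LatticePath :=
  {u | u.count true = α * k + 1 ∧ u.count false = k}

theorem length_of_mem_pathsEastPlusOne {k : ℕ} {u : LatticePath} (hu : u ∈ pathsEastPlusOne α k) :
    u.length = (α + 1) * k + 1 := by
  rw [← List.count_true_add_count_false, hu.1, hu.2]; ring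

theorem rotate_mem_pathsEastPlusOne {k : ℕ} {u : LatticePath} (hu : u ∈ pathsEastPlusOne α k)
    (r : ℕ) : u.rotate r ∈ pathsEastPlusOne α k := by
  simpa only [pathsEastPlusOne, Set.mem_ofPred_eq, (List.rotate_perm u r).count_eq] using hu

theorem existsUnique_rotate_height_nonneg {k : ℕ} {u : LatticePath}
    (hu : u ∈ pathsEastPlusOne α k) :
    ∃! r, r < u.length ∧ ∀ t < u.length, 0 ≤ height α (u.rotate r) t := by
  unfold height
  have hsum : (u.map (step α)).sum = -1 := by
    rw [sum_map_step, hu.1, hu.2]; push_cast; ring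
  simpa only [List.length_map, ← List.map_rotate, ← List.map_take] using
    List.existsUnique_rotate_sum_take_nonneg hsum

def pathsEastPlusOneAbove (α k : ℕ) : Set LatticePath :=
  {u | u ∈ pathsEastPlusOne α k ∧ ∀ t < u.length, 0 ≤ height α u t}

theorem mul_ncard_pathsEastPlusOneAbove (α k : ℕ) :
    ((α + 1) * k + 1) * (pathsEastPlusOneAbove α k).ncard = (pathsEastPlusOne α k).ncard := by
  set m := (α + 1) * k + 1
  have himage : (fun x : LatticePath × ℕ => x.1.rotate x.2) ''
      (pathsEastPlusOneAbove α k ×ˢ ↑(Finset.Ioc 0 m)) = pathsEastPlusOne α k := by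
    ext u
    constructor
    · rintro ⟨⟨w, s⟩, ⟨hw, -⟩, rfl⟩
      exact rotate_mem_pathsEastPlusOne hw.1 s
    · intro hu
      obtain ⟨r, ⟨hr, hgood⟩, -⟩ := existsUnique_rotate_height_nonneg hu
      have hlen : u.length = m := length_of_mem_pathsEastPlusOne hu
      refine ⟨(u.rotate r, m - r), ⟨⟨rotate_mem_pathsEastPlusOne hu r, ?_⟩, ?_⟩, ?_⟩
      · simpa using hgood
      · simp only [Finset.coe_Ioc, Set.mem_Ioc]
        omega
      · simp only
        rw [List.rotate_rotate, Nat.add_sub_cancel' (by omega), ← hlen, List.rotate_length]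
  have hinj : Set.InjOn (fun x : LatticePath × ℕ => x.1.rotate x.2)
      (pathsEastPlusOneAbove α k ×ˢ ↑(Finset.Ioc 0 m)) := by
    rintro ⟨w, s⟩ ⟨hw, hs⟩ ⟨w', s'⟩ ⟨hw', hs'⟩ heq
    wlog hss' : s' ≤ s generalizing w s w' s'
    · exact (this w' s' hw' hs' w s hw hs heq.symm (by omega)).symm
    simp only [Finset.coe_Ioc, Set.mem_Ioc] at hs hs' heq
    have hlen := length_of_mem_pathsEastPlusOne hw.1
    rw [← Nat.sub_add_cancel hss', ← List.rotate_rotate, List.rotate_eq_rotate] at heq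
    obtain ⟨r, -, huniq⟩ := existsUnique_rotate_height_nonneg hw.1
    have h0 := huniq 0 ⟨by omega, by simpa using hw.2⟩
    rw [← heq] at hw'
    have hd := huniq (s - s') ⟨by omega, by simpa using hw'.2⟩
    obtain rfl : s = s' := by omega
    simpa using heq
  rw [← himage, hinj.ncard_image, Set.ncard_prod, Set.ncard_coe_finset, Nat.card_Ioc, mul_comm]
  rfl

theorem pathsEastPlusOneAbove_eq_image (α k : ℕ) :
    pathsEastPlusOneAbove α k = (· ++ [true]) '' pathsAbove α k := by
  ext u
  constructor
  · rintro ⟨hu, hgood⟩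
    obtain ⟨p, b, rfl⟩ := (List.eq_nil_or_concat' u).resolve_left fun h => by
      simp [h, pathsEastPlusOne] at hu
    have hp := hgood p.length (by simp)
    have hend : height α (p ++ [b]) (p.length + 1) = -1 := by
      rw [show p.length + 1 = (p ++ [b]).length by simp, height_eq, List.take_length, hu.1, hu.2]
      push_cast
      ring
    rw [height_succ (b := b) (by simp), height_append_of_le le_rfl] at hend
    rw [height_append_of_le le_rfl] at hp
    cases b
    · simp only [step] at hend
      omega
    simp only [pathsEastPlusOne, Set.mem_ofPred_eq, List.count_append] at hu
    refine ⟨p, ⟨⟨by simpa using hu.1, by simpa using hu.2⟩, fun t => ?_⟩, rfl⟩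
    rcases le_or_gt t p.length with ht | ht
    · rw [← height_append_of_le (r := [true]) ht]
      exact hgood t (by simp; omega)
    · rwa [height_of_length_le ht.le]
  · rintro ⟨p, ⟨hpL, hab⟩, rfl⟩
    refine ⟨⟨by simp [hpL.1], by simp [hpL.2]⟩, fun t ht => ?_⟩
    rw [height_append_of_le (by simp at ht; omega)]
    exact hab t

theorem mul_ncard_pathsAbove (α k : ℕ) :
    (α * k + 1) * (pathsAbove α k).ncard = ((α + 1) * k).choose k := by
  have hcycle := mul_ncard_pathsEastPlusOneAbove α k
  rw [pathsEastPlusOneAbove_eq_image, Set.ncard_image_of_injective _ (List.append_left_injective _),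
    pathsEastPlusOne, ncard_setOf_count_eq, show α * k + 1 + k = (α + 1) * k + 1 by ring] at hcycle
  have hchoose := Nat.choose_mul_succ_eq ((α + 1) * k) k
  rw [show (α + 1) * k + 1 - k = α * k + 1 by rw [add_mul, one_mul]; omega] at hchoose
  apply Nat.eq_of_mul_eq_mul_left (Nat.succ_pos ((α + 1) * k))
  calc ((α + 1) * k + 1) * ((α * k + 1) * (pathsAbove α k).ncard)
      = (α * k + 1) * (((α + 1) * k + 1) * (pathsAbove α k).ncard) := by ring
    _ = ((α + 1) * k + 1) * ((α + 1) * k).choose k := by rw [hcycle, mul_comm, ← hchoose, mul_comm]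

theorem countGF_pathsAbove (α : ℕ) : countGF (pathsAbove α) = fussCatalan α := by
  ext k
  have h := mul_ncard_pathsAbove α k
  simp only [countGF, fussCatalan, PowerSeries.coeff_mk]
  rw [← h]
  push_cast
  field_simp

theorem ncard_paths (α k : ℕ) : (paths α k).ncard = ((α + 1) * k).choose k := by
  change {p : LatticePath | p.count true = α * k ∧ p.count false = 1 * k}.ncard = _
  rw [ncard_setOf_count_eq, one_mul, add_mul, one_mul]

theorem ncard_notNorthFirst (hα : 1 ≤ α) {k : ℕ} (hk : 1 ≤ k) :
    (notNorthFirst α k).ncard = ((α + 1) * k - 1).choose k := by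
  have hαk : 1 ≤ α * k := Nat.one_le_iff_ne_zero.2 (Nat.mul_ne_zero (by omega) (by omega))
  have himage : notNorthFirst α k =
      List.cons true '' {l | l.count true = α * k - 1 ∧ l.count false = k} := by
    ext (_ | ⟨_ | _, l⟩) <;> simp [notNorthFirst, InL] <;> omega
  rw [himage, Set.ncard_image_of_injective _ List.cons_injective, ncard_setOf_count_eq]
  congr 1
  rw [add_mul, one_mul]
  omega

theorem countGF_notNorthFirst (hα : 1 ≤ α) :
    countGF (notNorthFirst α) = 1 + geeSer α 1 + genSer α 1 := by
  ext k
  simp only [countGF, geeSer, genSer, map_add, PowerSeries.coeff_mk, PowerSeries.coeff_one]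
  rcases Nat.eq_zero_or_pos k with rfl | hk
  · simp [notNorthFirst_zero]
  · rw [ncard_notNorthFirst hα hk, choose_sub_one_eq_add hα hk, one_mul]
    simp [hk.ne']

theorem countGF_eastFirst (α : ℕ) :
    countGF (eastFirst α) = countGF (notNorthFirst α) - 1 := by
  ext k
  simp only [countGF, map_sub, PowerSeries.coeff_mk, PowerSeries.coeff_one, eastFirst_eq_diff]
  rcases Nat.eq_zero_or_pos k with rfl | hk
  · simp [notNorthFirst_zero]
  · have hnil : [] ∉ notNorthFirst α k := fun h => by
      have := h.1.2
      simp at this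
      omega
    simp [Set.sdiff_singleton_eq_self hnil, hk.ne']

theorem one_add_mul_countGF_notNorthFirst (hα : 1 ≤ α) :
    (1 + α : PowerSeries ℚ) * countGF (notNorthFirst α) = 1 + α * countGF (paths α) := by
  ext k
  rw [add_mul, one_mul, ← map_natCast PowerSeries.C α]
  simp only [countGF, map_add, PowerSeries.coeff_C_mul, PowerSeries.coeff_mk,
    PowerSeries.coeff_one]
  rcases Nat.eq_zero_or_pos k with rfl | hk
  · simp [notNorthFirst_zero, ncard_paths]
  · rw [ncard_notNorthFirst hα hk, ncard_paths, if_neg hk.ne', zero_add, ← one_add_mul]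
    rw [add_comm (1 : ℚ)]
    exact_mod_cast succ_mul_choose_sub_one hk

theorem gfOf_eq_countGF {S : ℕ → Set LatticePath} (h : S 0 = ∅) : gfOf S = countGF S := by
  ext k
  rcases Nat.eq_zero_or_pos k with rfl | hk
  · simp [gfOf, countGF, h]
  · simp [gfOf, countGF, hk.ne']

theorem HEstar_eq_countGF (α : ℕ) : HEstar α = countGF (eastFirstNoEastReturn α) := by
  have hsets : (fun k => {p | InL α 1 k p ∧ FirstStep p true ∧ NoHCross α p ∧
      ∀ i, ¬ IsRightBounce α 1 p i}) = eastFirstNoEastReturn α := by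
    ext k p
    exact and_congr_right' (and_congr_right' noHCross_and_noRightBounce_iff)
  rw [HEstar, hsets, gfOf_eq_countGF]
  ext p
  simp only [eastFirstNoEastReturn, Set.mem_ofPred_eq, Set.mem_empty_iff_false, iff_false]
  exact fun ⟨hp, hfirst, _⟩ => ne_nil_of_firstStep hfirst (eq_nil_of_inL_zero hp)

theorem HEstar_mul_countGF_notNorthFirst (α : ℕ) :
    HEstar α * countGF (notNorthFirst α) = countGF (notNorthFirst α) - 1 := by
  rw [HEstar_eq_countGF, countGF_eastFirstNoEastReturn_mul, countGF_eastFirst]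

theorem HEstar_eq (hα : 1 ≤ α) : HEstar α = (α : PowerSeries ℚ) * (fussCatalan α - 1) := by
  have hunit : countGF (notNorthFirst α) ≠ 0 := fun h => by
    simpa [countGF, notNorthFirst_zero] using congrArg (PowerSeries.coeff 0) h
  rw [← countGF_pathsAbove]
  apply mul_right_cancel₀ hunit
  linear_combination HEstar_mul_countGF_notNorthFirst α - (α : PowerSeries ℚ) *
    countGF_pathsAbove_mul hα + one_add_mul_countGF_notNorthFirst hα

theorem NstartNHC_eq (hα : 1 ≤ α) : NstartNHC α = countGF (pathsAbove α) - 1 := by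
  ext k
  simp only [NstartNHC, gfOf, countGF, map_sub, PowerSeries.coeff_mk, PowerSeries.coeff_one]
  rcases Nat.eq_zero_or_pos k with rfl | hk
  · simp [pathsAbove_zero]
  · simp [hk.ne', setOf_firstStep_false_noHCross_eq hα hk]

end LatticePath

/-- For `β = 1`, `α ≥ 1`:
`H_{E✳}·(1 + g_ee + g_en) = g_ee + g_en` (i.e. `H_{E✳} = g_{E✳}/(1+g_{E✳})`),
`H_{E✳} = α·(c_α(x) − 1)`, and the generating function of paths starting with an
N-step and having no horizontal crosses equals `c_α(x) − 1`; that is, for each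
`k ≥ 1` the number of such paths is the Fuss–Catalan number `(1/(αk+1))·C((α+1)k, k)`. -/
theorem statement19 (α : ℕ) (hα : 1 ≤ α) :
    HEstar α * (1 + geeSer α 1 + genSer α 1) = geeSer α 1 + genSer α 1 ∧
    HEstar α = (α : PowerSeries ℚ) * (fussCatalan α - 1) ∧
    NstartNHC α = fussCatalan α - 1 ∧
    ∀ k : ℕ, 1 ≤ k →
      (({p | InL α 1 k p ∧ FirstStep p false ∧ NoHCross α p} :
          Set LatticePath).ncard : ℚ)
        = (1 / ((α * k + 1 : ℕ) : ℚ)) * ((((α + 1) * k).choose k : ℕ) : ℚ) := by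
  have hN : NstartNHC α = fussCatalan α - 1 := by
    rw [LatticePath.NstartNHC_eq hα, LatticePath.countGF_pathsAbove]
  refine ⟨?_, LatticePath.HEstar_eq hα, hN, fun k hk => ?_⟩
  · linear_combination LatticePath.HEstar_mul_countGF_notNorthFirst α -
      (HEstar α - 1) * LatticePath.countGF_notNorthFirst hα
  · simpa [NstartNHC, gfOf, fussCatalan, Nat.one_le_iff_ne_zero.1 hk] using
      congrArg (PowerSeries.coeff k) hN
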